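/- Let S be a simple restricted 𝔇-module of level ℓ ≠ 0. Then: (i) h_{n_S−1/2} acts injectively on W₀ and d_{m_S−1} acts injectively on U₀; (ii) n_S ∈ ℕ and m_S ∈ ℕ; (iii) W₀ is nonzero and is stable under the action of the subalgebra 𝔇^{(0,−n_S)} and under all Sugawara operators L_n with n ∈ ℕ; (iv) if m_S ≥ 2n_S, then U₀ is nonzero, is stable under the action of 𝔇^{(0,−n_S)}, and is invariant under all Sugawara operators L_n with n ∈ ℕ. -/
import Mathlib


open scoped TensorProduct

noncomputable section

/-- A representation of the mirror Heisenberg–Virasoro algebra `𝔇` on the complex vector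
space `V`.  Here `d m` is the action of `d_m` (`m ∈ ℤ`), `h i` is the action of
`h_{i+1/2}` (so half-integers `r ∈ 1/2 + ℤ` are indexed by the integer `i` with
`r = i + 1/2`), and `c1`, `c2` are the actions of the two central elements.
The axioms say precisely that the linear map `𝔇 → End(V)` determined by these data is a
homomorphism of Lie algebras, i.e. that `V` is a `𝔇`-module. -/
structure MirrorHV (V : Type) [AddCommGroup V] [Module ℂ V] : Type where
  d : ℤ → Module.End ℂ V
  h : ℤ → Module.End ℂ V
  c1 : Module.End ℂ V
  c2 : Module.End ℂ V
  dd : ∀ m n : ℤ, ⁅d m, d n⁆ = ((m : ℂ) - (n : ℂ)) • d (m + n) +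
      (if m + n = 0 then ((m : ℂ) ^ 3 - (m : ℂ)) / 12 else 0) • c1
  dh : ∀ m i : ℤ, ⁅d m, h i⁆ = (-((i : ℂ) + 1 / 2)) • h (m + i)
  hh : ∀ i j : ℤ, ⁅h i, h j⁆ = (if i + j + 1 = 0 then (i : ℂ) + 1 / 2 else 0) • c2
  c1_d : ∀ m : ℤ, ⁅c1, d m⁆ = 0
  c1_h : ∀ i : ℤ, ⁅c1, h i⁆ = 0
  c2_d : ∀ m : ℤ, ⁅c2, d m⁆ = 0
  c2_h : ∀ i : ℤ, ⁅c2, h i⁆ = 0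
  c1_c2 : ⁅c1, c2⁆ = 0

namespace MirrorHV

variable {V : Type} [AddCommGroup V] [Module ℂ V]

/-- A subspace invariant under the `𝔇`-action, i.e. a `𝔇`-submodule. -/
def Invariant (ρ : MirrorHV V) (W : Submodule ℂ V) : Prop :=
  (∀ m : ℤ, ∀ w ∈ W, ρ.d m w ∈ W) ∧ (∀ i : ℤ, ∀ w ∈ W, ρ.h i w ∈ W) ∧
    (∀ w ∈ W, ρ.c1 w ∈ W) ∧ (∀ w ∈ W, ρ.c2 w ∈ W)

/-- Simplicity of a `𝔇`-module. -/
def IsSimple (ρ : MirrorHV V) : Prop :=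
  Nontrivial V ∧ ∀ W : Submodule ℂ V, ρ.Invariant W → W = ⊥ ∨ W = ⊤

/-- A `𝔇`-module is restricted if every vector is killed by `d_i` and `h_{i+1/2}` for all
sufficiently large `i`. -/
def Restricted (ρ : MirrorHV V) : Prop :=
  ∀ v : V, ∃ N : ℕ, ∀ i : ℤ, (N : ℤ) < i → ρ.d i v = 0 ∧ ρ.h i v = 0

/-- The central element `c₂` acts as the scalar `ℓ` (the level). -/
def Level (ρ : MirrorHV V) (ℓ : ℂ) : Prop := ρ.c2 = ℓ • (1 : Module.End ℂ V)

/-- The central element `c₁` acts as the scalar `c` (the central charge). -/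
def CentralCharge (ρ : MirrorHV V) (c : ℂ) : Prop := ρ.c1 = c • (1 : Module.End ℂ V)

end MirrorHV

/-- A representation of the twisted Heisenberg algebra `𝔥` (basis `h_r`, `r ∈ 1/2 + ℤ`,
and the central element `c₂`); `h i` is the action of `h_{i+1/2}`. -/
structure Heis (H : Type) [AddCommGroup H] [Module ℂ H] : Type where
  h : ℤ → Module.End ℂ H
  c2 : Module.End ℂ H
  hh : ∀ i j : ℤ, ⁅h i, h j⁆ = (if i + j + 1 = 0 then (i : ℂ) + 1 / 2 else 0) • c2
  c2_h : ∀ i : ℤ, ⁅c2, h i⁆ = 0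

namespace Heis

variable {H : Type} [AddCommGroup H] [Module ℂ H]

/-- An `𝔥`-submodule of an `𝔥`-module. -/
def Invariant (τ : Heis H) (W : Submodule ℂ H) : Prop :=
  (∀ i : ℤ, ∀ w ∈ W, τ.h i w ∈ W) ∧ ∀ w ∈ W, τ.c2 w ∈ W

/-- Simplicity of an `𝔥`-module. -/
def IsSimple (τ : Heis H) : Prop :=
  Nontrivial H ∧ ∀ W : Submodule ℂ H, τ.Invariant W → W = ⊥ ∨ W = ⊤

/-- A restricted `𝔥`-module: each vector is killed by `h_r` for `r` large. -/
def Restricted (τ : Heis H) : Prop :=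
  ∀ v : H, ∃ N : ℤ, ∀ i : ℤ, N < i → τ.h i v = 0

/-- The central element `c₂` acts as the scalar `ℓ`. -/
def Level (τ : Heis H) (ℓ : ℂ) : Prop := τ.c2 = ℓ • (1 : Module.End ℂ H)

/-- `L` is the family of Sugawara operators
`L_n = (1/(2ℓ)) ∑_{k ∈ 1/2+ℤ} h_{n-k} h_k` for `n ≠ 0` and
`L_0 = (1/(2ℓ)) ∑_{k ∈ 1/2+ℤ} h_{-|k|} h_{|k|} + 1/16`
of the restricted `𝔥`-representation `τ` of level `ℓ`:  `L n v` is characterized as the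
(finite) truncation of the above sums at any cutoff `N` valid for `v`; all omitted terms
annihilate `v`. -/
def Sugawara (τ : Heis H) (ℓ : ℂ) (L : ℤ → Module.End ℂ H) : Prop :=
  ∀ (n : ℤ) (v : H) (N : ℤ), (∀ i : ℤ, N < i → τ.h i v = 0) →
    L n v =
      if n = 0 then
        ℓ⁻¹ • (∑ i ∈ Finset.Icc (0 : ℤ) N, τ.h (-1 - i) (τ.h i v)) + (16 : ℂ)⁻¹ • v
      else
        (2 * ℓ)⁻¹ • ∑ i ∈ Finset.Icc (n - 1 - N) N, τ.h (n - 1 - i) (τ.h i v)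

end Heis

/-- A representation of the Virasoro algebra `Vir` (basis `d_m`, `m ∈ ℤ`, and the central
element `c₁`). -/
structure Vira (U : Type) [AddCommGroup U] [Module ℂ U] : Type where
  d : ℤ → Module.End ℂ U
  c1 : Module.End ℂ U
  dd : ∀ m n : ℤ, ⁅d m, d n⁆ = ((m : ℂ) - (n : ℂ)) • d (m + n) +
      (if m + n = 0 then ((m : ℂ) ^ 3 - (m : ℂ)) / 12 else 0) • c1
  c1_d : ∀ m : ℤ, ⁅c1, d m⁆ = 0

namespace Vira

variable {U : Type} [AddCommGroup U] [Module ℂ U]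

/-- A `Vir`-submodule. -/
def Invariant (υ : Vira U) (W : Submodule ℂ U) : Prop :=
  (∀ m : ℤ, ∀ w ∈ W, υ.d m w ∈ W) ∧ ∀ w ∈ W, υ.c1 w ∈ W

/-- Simplicity of a `Vir`-module. -/
def IsSimple (υ : Vira U) : Prop :=
  Nontrivial U ∧ ∀ W : Submodule ℂ U, υ.Invariant W → W = ⊥ ∨ W = ⊤

/-- A restricted `Vir`-module. -/
def Restricted (υ : Vira U) : Prop :=
  ∀ v : U, ∃ N : ℤ, ∀ i : ℤ, N < i → υ.d i v = 0

end Vira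

variable {V : Type} [AddCommGroup V] [Module ℂ V]

/-- The restriction of a `𝔇`-representation to the twisted Heisenberg subalgebra `𝔥`. -/
def MirrorHV.toHeis (ρ : MirrorHV V) : Heis V := ⟨ρ.h, ρ.c2, ρ.hh, ρ.c2_h⟩

/-- A representation of the subalgebra `𝔇^{(0,t)}` of `𝔇`, spanned by the `d_j` (`j ≥ 0`),
the `h_{i+1/2}` (`i ≥ t`) and `c₁`, `c₂`.  (The paper's `𝔇^{(0,n)}`, spanned by the
`d_i` and `h_{n+i+1/2}` for `i ∈ ℕ` together with `c₁, c₂`, corresponds to the h-index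
cutoff `t = n`.)  The values of the fields `d`, `h` below the cutoffs are irrelevant:
no condition ever refers to them. -/
structure SubHV (t : ℤ) (V : Type) [AddCommGroup V] [Module ℂ V] : Type where
  d : ℤ → Module.End ℂ V
  h : ℤ → Module.End ℂ V
  c1 : Module.End ℂ V
  c2 : Module.End ℂ V
  dd : ∀ m n : ℤ, 0 ≤ m → 0 ≤ n → ⁅d m, d n⁆ = ((m : ℂ) - (n : ℂ)) • d (m + n) +
      (if m + n = 0 then ((m : ℂ) ^ 3 - (m : ℂ)) / 12 else 0) • c1
  dh : ∀ m i : ℤ, 0 ≤ m → t ≤ i → ⁅d m, h i⁆ = (-((i : ℂ) + 1 / 2)) • h (m + i)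
  hh : ∀ i j : ℤ, t ≤ i → t ≤ j →
      ⁅h i, h j⁆ = (if i + j + 1 = 0 then (i : ℂ) + 1 / 2 else 0) • c2
  c1_d : ∀ m : ℤ, 0 ≤ m → ⁅c1, d m⁆ = 0
  c1_h : ∀ i : ℤ, t ≤ i → ⁅c1, h i⁆ = 0
  c2_d : ∀ m : ℤ, 0 ≤ m → ⁅c2, d m⁆ = 0
  c2_h : ∀ i : ℤ, t ≤ i → ⁅c2, h i⁆ = 0
  c1_c2 : ⁅c1, c2⁆ = 0

namespace SubHV

variable {t : ℤ} {V : Type} [AddCommGroup V] [Module ℂ V]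

/-- A `𝔇^{(0,t)}`-submodule. -/
def Invariant (τ : SubHV t V) (W : Submodule ℂ V) : Prop :=
  (∀ m : ℤ, 0 ≤ m → ∀ w ∈ W, τ.d m w ∈ W) ∧ (∀ i : ℤ, t ≤ i → ∀ w ∈ W, τ.h i w ∈ W) ∧
    (∀ w ∈ W, τ.c1 w ∈ W) ∧ (∀ w ∈ W, τ.c2 w ∈ W)

/-- Simplicity of a `𝔇^{(0,t)}`-module. -/
def IsSimple (τ : SubHV t V) : Prop :=
  Nontrivial V ∧ ∀ W : Submodule ℂ V, τ.Invariant W → W = ⊥ ∨ W = ⊤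

/-- `f` is a homomorphism of `𝔇^{(0,t)}`-modules. -/
def Map (τ : SubHV t V) {W : Type} [AddCommGroup W] [Module ℂ W] (σ : SubHV t W)
    (f : V →ₗ[ℂ] W) : Prop :=
  (∀ m : ℤ, 0 ≤ m → ∀ v : V, f (τ.d m v) = σ.d m (f v)) ∧
    (∀ i : ℤ, t ≤ i → ∀ v : V, f (τ.h i v) = σ.h i (f v)) ∧
    (∀ v : V, f (τ.c1 v) = σ.c1 (f v)) ∧ (∀ v : V, f (τ.c2 v) = σ.c2 (f v))

end SubHV

/-- The restriction of a `𝔇`-representation to the subalgebra `𝔇^{(0,t)}`. -/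
def MirrorHV.toSub (ρ : MirrorHV V) (t : ℤ) : SubHV t V where
  d := ρ.d
  h := ρ.h
  c1 := ρ.c1
  c2 := ρ.c2
  dd := fun m n _ _ => ρ.dd m n
  dh := fun m i _ _ => ρ.dh m i
  hh := fun i j _ _ => ρ.hh i j
  c1_d := fun m _ => ρ.c1_d m
  c1_h := fun i _ => ρ.c1_h i
  c2_d := fun m _ => ρ.c2_d m
  c2_h := fun i _ => ρ.c2_h i
  c1_c2 := ρ.c1_c2

/-- `F` is a homomorphism of `𝔇`-modules. -/
def MirrorHV.Map (ρ : MirrorHV V) {W : Type} [AddCommGroup W] [Module ℂ W]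
    (σ : MirrorHV W) (F : V →ₗ[ℂ] W) : Prop :=
  (∀ m : ℤ, ∀ v : V, F (ρ.d m v) = σ.d m (F v)) ∧
    (∀ i : ℤ, ∀ v : V, F (ρ.h i v) = σ.h i (F v)) ∧
    (∀ v : V, F (ρ.c1 v) = σ.c1 (F v)) ∧ (∀ v : V, F (ρ.c2 v) = σ.c2 (F v))

/-- `(M, ρ, ι)` realizes the induced `𝔇`-module `Ind^𝔇_{𝔇^{(0,t)}} V` of the
`𝔇^{(0,t)}`-module `(V, τ)`: this is the universal property characterizing
`U(𝔇) ⊗_{U(𝔇^{(0,t)})} V` together with its canonical map `ι : V → Ind V`. -/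
def IsInduced (t : ℤ) {V : Type} [AddCommGroup V] [Module ℂ V] (τ : SubHV t V)
    {M : Type} [AddCommGroup M] [Module ℂ M] (ρ : MirrorHV M) (ι : V →ₗ[ℂ] M) : Prop :=
  τ.Map (ρ.toSub t) ι ∧
    ∀ (W : Type) (_ : AddCommGroup W) (_ : Module ℂ W) (σ : MirrorHV W) (f : V →ₗ[ℂ] W),
      τ.Map (σ.toSub t) f → ∃! F : M →ₗ[ℂ] W, ρ.Map σ F ∧ F.comp ι = f

/-- `σ` is the `𝔇^{(0,t)}`-module structure on the subspace `W` of `V` obtained by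
restricting the `𝔇`-action `ρ`. -/
def SubHV.IsRestrictionOf {t : ℤ} {V : Type} [AddCommGroup V] [Module ℂ V]
    {W : Submodule ℂ V} (σ : SubHV t ↥W) (ρ : MirrorHV V) : Prop :=
  (∀ m : ℤ, 0 ≤ m → ∀ w : ↥W, (σ.d m w : V) = ρ.d m (w : V)) ∧
    (∀ i : ℤ, t ≤ i → ∀ w : ↥W, (σ.h i w : V) = ρ.h i (w : V)) ∧
    (∀ w : ↥W, (σ.c1 w : V) = ρ.c1 (w : V)) ∧ (∀ w : ↥W, (σ.c2 w : V) = ρ.c2 (w : V))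

/-- The subspace `W` of the `𝔇`-module `(V, ρ)` (necessarily invariant under
`𝔇^{(0,t)}`) is a simple `𝔇^{(0,t)}`-module under the restricted action, and `V` is
isomorphic to the induced module `Ind^𝔇_{𝔇^{(0,t)}} W`. -/
def InducedFromSub (t : ℤ) {V : Type} [AddCommGroup V] [Module ℂ V]
    (ρ : MirrorHV V) (W : Submodule ℂ V) : Prop :=
  ∃ σ : SubHV t ↥W, σ.IsRestrictionOf ρ ∧ σ.IsSimple ∧
    ∃ ι : ↥W →ₗ[ℂ] V, IsInduced t σ ρ ι

/-- `(V, ρ) ≅ H^𝔇 ⊗ U^𝔇` as `𝔇`-modules, where the Heisenberg module `(H, τ)` carries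
the `𝔇`-action through its Sugawara operators `L` (with `c₁` acting as `1`), and the
Virasoro module `(U, υ)` carries the `𝔇`-action with `𝔥` acting by zero; the action on
the tensor product is `x·(a ⊗ b) = (x·a) ⊗ b + a ⊗ (x·b)`. -/
def IsTensorOf {S : Type} [AddCommGroup S] [Module ℂ S] {H : Type} [AddCommGroup H]
    [Module ℂ H] {U : Type} [AddCommGroup U] [Module ℂ U] (ρ : MirrorHV S) (τ : Heis H)
    (L : ℤ → Module.End ℂ H) (υ : Vira U) : Prop :=
  ∃ e : H ⊗[ℂ] U ≃ₗ[ℂ] S,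
    (∀ (m : ℤ) (a : H) (b : U),
      ρ.d m (e (a ⊗ₜ[ℂ] b)) = e ((L m a) ⊗ₜ[ℂ] b + a ⊗ₜ[ℂ] (υ.d m b))) ∧
    (∀ (i : ℤ) (a : H) (b : U), ρ.h i (e (a ⊗ₜ[ℂ] b)) = e ((τ.h i a) ⊗ₜ[ℂ] b)) ∧
    (∀ (a : H) (b : U), ρ.c1 (e (a ⊗ₜ[ℂ] b)) = e (a ⊗ₜ[ℂ] b + a ⊗ₜ[ℂ] (υ.c1 b))) ∧
    (∀ (a : H) (b : U), ρ.c2 (e (a ⊗ₜ[ℂ] b)) = e ((τ.c2 a) ⊗ₜ[ℂ] b))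

/-- `(V, ρ) ≅ H^𝔇` as `𝔇`-modules, where the Heisenberg module `(H, τ)` carries the
`𝔇`-action through its Sugawara operators `L` and `c₁` acts as `1`. -/
def IsHeisOf {S : Type} [AddCommGroup S] [Module ℂ S] {H : Type} [AddCommGroup H]
    [Module ℂ H] (ρ : MirrorHV S) (τ : Heis H) (L : ℤ → Module.End ℂ H) : Prop :=
  ∃ e : H ≃ₗ[ℂ] S,
    (∀ (m : ℤ) (a : H), ρ.d m (e a) = e (L m a)) ∧
    (∀ (i : ℤ) (a : H), ρ.h i (e a) = e (τ.h i a)) ∧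
    (∀ a : H, ρ.c1 (e a) = e a) ∧ (∀ a : H, ρ.c2 (e a) = e (τ.c2 a))

/-- `S(r) = Ann_S(𝔥^{(r)}) = {v | h_{r+i+1/2}·v = 0 for all i ∈ ℕ}`. -/
def annH (ρ : MirrorHV V) (r : ℤ) : Submodule ℂ V where
  carrier := {v : V | ∀ i : ℤ, r ≤ i → ρ.h i v = 0}
  add_mem' := by
    intro a b ha hb
    simp only [Set.mem_setOf_eq] at *
    intro i hi
    rw [map_add, ha i hi, hb i hi, add_zero]
  zero_mem' := by
    simp only [Set.mem_setOf_eq]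
    intro i _
    exact map_zero _
  smul_mem' := by
    intro c v hv
    simp only [Set.mem_setOf_eq] at *
    intro i hi
    rw [map_smul, hv i hi, smul_zero]

/-- `{v | d_{r+i}·v = 0 for all i ∈ ℕ}`. -/
def annD (ρ : MirrorHV V) (r : ℤ) : Submodule ℂ V where
  carrier := {v : V | ∀ p : ℤ, r ≤ p → ρ.d p v = 0}
  add_mem' := by
    intro a b ha hb
    simp only [Set.mem_setOf_eq] at *
    intro p hp
    rw [map_add, ha p hp, hb p hp, add_zero]
  zero_mem' := by
    simp only [Set.mem_setOf_eq]
    intro p _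
    exact map_zero _
  smul_mem' := by
    intro c v hv
    simp only [Set.mem_setOf_eq] at *
    intro p hp
    rw [map_smul, hv p hp, smul_zero]

/-- `{v | d'_p·v = (d_p - L_p)·v = 0 for all p ≥ r}`. -/
def annD' (ρ : MirrorHV V) (L : ℤ → Module.End ℂ V) (r : ℤ) : Submodule ℂ V where
  carrier := {v : V | ∀ p : ℤ, r ≤ p → (ρ.d p - L p) v = 0}
  add_mem' := by
    intro a b ha hb
    simp only [Set.mem_setOf_eq] at *
    intro p hp
    rw [map_add, ha p hp, hb p hp, add_zero]
  zero_mem' := by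
    simp only [Set.mem_setOf_eq]
    intro p _
    exact map_zero _
  smul_mem' := by
    intro c v hv
    simp only [Set.mem_setOf_eq] at *
    intro p hp
    rw [map_smul, hv p hp, smul_zero]

/-- `Y_n = {v ∈ U₀ : d'_p·v = 0 for all p ≥ n}`, where `U₀` is built from the invariants
`n_S` and `m_S`. -/
def Ysub (ρ : MirrorHV V) (L : ℤ → Module.End ℂ V) (nS mS n : ℤ) : Submodule ℂ V :=
  annH ρ nS ⊓ annD ρ mS ⊓ annD' ρ L n

/-- The `𝔥`-submodule `U(𝔥)·W` of `V` generated by the subspace `W`. -/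
def heisSpan (ρ : MirrorHV V) (W : Submodule ℂ V) : Submodule ℂ V :=
  sInf {X : Submodule ℂ V | W ≤ X ∧ (∀ i : ℤ, ∀ x ∈ X, ρ.h i x ∈ X) ∧ ∀ x ∈ X, ρ.c2 x ∈ X}

/-- The subspace `K` of `V` is a simple `𝔥`-submodule of the `𝔇`-module `(V, ρ)`. -/
def heisSimpleSub (ρ : MirrorHV V) (K : Submodule ℂ V) : Prop :=
  K ≠ ⊥ ∧ (∀ i : ℤ, ∀ x ∈ K, ρ.h i x ∈ K) ∧ (∀ x ∈ K, ρ.c2 x ∈ K) ∧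
    ∀ W : Submodule ℂ V, W ≤ K → (∀ i : ℤ, ∀ x ∈ W, ρ.h i x ∈ W) →
      (∀ x ∈ W, ρ.c2 x ∈ W) → W = ⊥ ∨ W = K

end

section AuxLemmas

variable {V : Type} [AddCommGroup V] [Module ℂ V]

private lemma end_comm_apply (f g : Module.End ℂ V) (v : V) :
    f (g v) - g (f v) = ⁅f, g⁆ v := by
  simp [Ring.lie_def, LinearMap.sub_apply, Module.End.mul_apply]

private lemma comm_of_lie_zero {f g : Module.End ℂ V} (h : ⁅f, g⁆ = 0) (v : V) :
    f (g v) = g (f v) := by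
  have h2 := end_comm_apply f g v
  rw [h, LinearMap.zero_apply] at h2
  exact sub_eq_zero.mp h2

private lemma mem_annH' {ρ : MirrorHV V} {r : ℤ} {v : V} :
    v ∈ annH ρ r ↔ ∀ i : ℤ, r ≤ i → ρ.h i v = 0 := Iff.rfl

private lemma mem_annD' {ρ : MirrorHV V} {r : ℤ} {v : V} :
    v ∈ annD ρ r ↔ ∀ p : ℤ, r ≤ p → ρ.d p v = 0 := Iff.rfl

private lemma half_ne (k : ℤ) : (k : ℂ) + 1 / 2 ≠ 0 := by
  intro h
  have h2 : ((2 * k + 1 : ℤ) : ℂ) = 0 := by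
    have : ((2 * k + 1 : ℤ) : ℂ) = 2 * ((k : ℂ) + 1 / 2) := by push_cast; ring
    rw [this, h, mul_zero]
  have h3 : (2 * k + 1 : ℤ) = 0 := by exact_mod_cast h2
  omega

private lemma hh_apply (ρ : MirrorHV V) (i j : ℤ) (v : V) :
    ρ.h i (ρ.h j v) - ρ.h j (ρ.h i v)
      = (if i + j + 1 = 0 then (i : ℂ) + 1 / 2 else 0) • ρ.c2 v := by
  rw [end_comm_apply, ρ.hh, LinearMap.smul_apply]

private lemma dh_apply (ρ : MirrorHV V) (m i : ℤ) (v : V) :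
    ρ.d m (ρ.h i v) - ρ.h i (ρ.d m v) = (-((i : ℂ) + 1 / 2)) • ρ.h (m + i) v := by
  rw [end_comm_apply, ρ.dh, LinearMap.smul_apply]

private lemma dd_apply (ρ : MirrorHV V) (m n : ℤ) (v : V) :
    ρ.d m (ρ.d n v) - ρ.d n (ρ.d m v) = ((m : ℂ) - (n : ℂ)) • ρ.d (m + n) v +
      (if m + n = 0 then ((m : ℂ) ^ 3 - (m : ℂ)) / 12 else 0) • ρ.c1 v := by
  rw [end_comm_apply, ρ.dd, LinearMap.add_apply, LinearMap.smul_apply,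
    LinearMap.smul_apply]

end AuxLemmas

/-- Lemma 4.2.  Let `S` be a simple restricted `𝔇`-module of level
`ℓ ≠ 0`, with invariants `n_S` (the least `r` with `S(r) = Ann_S(𝔥^{(r)}) ≠ 0`, here `annH`)
and `m_S` (the least `r` with `U(r) = {v ∈ W₀ : d_{r+i}v = 0 ∀ i ∈ ℕ} ≠ 0`), `W₀ = S(n_S)`,
`U₀ = U(m_S)`.  Then: (i) `h_{n_S-1/2}` acts injectively on `W₀` and `d_{m_S-1}` acts
injectively on `U₀`; (ii) `n_S, m_S ∈ ℕ`; (iii) `W₀` is nonzero, stable under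
`𝔇^{(0,-n_S)}` and under the Sugawara operators `L_n`, `n ∈ ℕ`; (iv) if `m_S ≥ 2n_S` then
`U₀` is nonzero, stable under `𝔇^{(0,-n_S)}` and under the Sugawara operators `L_n`,
`n ∈ ℕ`. -/
theorem statement_3 (V : Type) [AddCommGroup V] [Module ℂ V]
    (ρ : MirrorHV V) (ℓ : ℂ) (hℓ : ℓ ≠ 0)
    (hsimple : ρ.IsSimple) (hres : ρ.Restricted) (hlevel : ρ.Level ℓ)
    (nS : ℤ) (hnS₁ : annH ρ nS ≠ ⊥) (hnS₂ : ∀ r : ℤ, r < nS → annH ρ r = ⊥)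
    (mS : ℤ) (hmS₁ : annH ρ nS ⊓ annD ρ mS ≠ ⊥)
    (hmS₂ : ∀ r : ℤ, r < mS → annH ρ nS ⊓ annD ρ r = ⊥) :
    -- (i)
    ((∀ v ∈ annH ρ nS, ρ.h (nS - 1) v = 0 → v = 0) ∧
      (∀ v ∈ annH ρ nS ⊓ annD ρ mS, ρ.d (mS - 1) v = 0 → v = 0)) ∧
    -- (ii)
    (0 ≤ nS ∧ 0 ≤ mS) ∧
    -- (iii)
    (annH ρ nS ≠ ⊥ ∧
      (∀ m : ℤ, 0 ≤ m → ∀ v ∈ annH ρ nS, ρ.d m v ∈ annH ρ nS) ∧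
      (∀ i : ℤ, -nS ≤ i → ∀ v ∈ annH ρ nS, ρ.h i v ∈ annH ρ nS) ∧
      (∀ v ∈ annH ρ nS, ρ.c1 v ∈ annH ρ nS) ∧
      (∀ v ∈ annH ρ nS, ρ.c2 v ∈ annH ρ nS) ∧
      (∀ L : ℤ → Module.End ℂ V, ρ.toHeis.Sugawara ℓ L →
        ∀ n : ℤ, 0 ≤ n → ∀ v ∈ annH ρ nS, L n v ∈ annH ρ nS)) ∧
    -- (iv)
    (2 * nS ≤ mS →
      annH ρ nS ⊓ annD ρ mS ≠ ⊥ ∧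
      (∀ m : ℤ, 0 ≤ m → ∀ v ∈ annH ρ nS ⊓ annD ρ mS, ρ.d m v ∈ annH ρ nS ⊓ annD ρ mS) ∧
      (∀ i : ℤ, -nS ≤ i → ∀ v ∈ annH ρ nS ⊓ annD ρ mS, ρ.h i v ∈ annH ρ nS ⊓ annD ρ mS) ∧
      (∀ v ∈ annH ρ nS ⊓ annD ρ mS, ρ.c1 v ∈ annH ρ nS ⊓ annD ρ mS) ∧
      (∀ v ∈ annH ρ nS ⊓ annD ρ mS, ρ.c2 v ∈ annH ρ nS ⊓ annD ρ mS) ∧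
      (∀ L : ℤ → Module.End ℂ V, ρ.toHeis.Sugawara ℓ L →
        ∀ n : ℤ, 0 ≤ n → ∀ v ∈ annH ρ nS ⊓ annD ρ mS, L n v ∈ annH ρ nS ⊓ annD ρ mS)) := by
  have hc2 : ∀ w : V, ρ.c2 w = ℓ • w := by
    intro w; rw [hlevel]; simp
  -- (i) first half: h_{nS - 1/2} is injective on W₀
  have inj_h : ∀ v ∈ annH ρ nS, ρ.h (nS - 1) v = 0 → v = 0 := by
    intro v hv h0
    have hmem : v ∈ annH ρ (nS - 1) := by
      rw [mem_annH']
      intro i hi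
      rcases eq_or_lt_of_le hi with he | hl
      · rw [← he]; exact h0
      · exact mem_annH'.mp hv i (by omega)
    rw [hnS₂ (nS - 1) (by omega)] at hmem
    simpa using hmem
  -- (i) second half: d_{mS - 1} is injective on U₀
  have inj_d : ∀ v ∈ annH ρ nS ⊓ annD ρ mS, ρ.d (mS - 1) v = 0 → v = 0 := by
    intro v hv h0
    rw [Submodule.mem_inf] at hv
    obtain ⟨hvH, hvD⟩ := hv
    have hmem : v ∈ annH ρ nS ⊓ annD ρ (mS - 1) := by
      rw [Submodule.mem_inf]
      refine ⟨hvH, ?_⟩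
      rw [mem_annD']
      intro p hp
      rcases eq_or_lt_of_le hp with he | hl
      · rw [← he]; exact h0
      · exact mem_annD'.mp hvD p (by omega)
    rw [hmS₂ (mS - 1) (by omega)] at hmem
    simpa using hmem
  -- (ii) first half: 0 ≤ nS
  have hnS0 : 0 ≤ nS := by
    by_contra hneg
    push_neg at hneg
    apply hnS₁
    rw [eq_bot_iff]
    intro v hv
    have h1 : ρ.h (-1 - nS) v = 0 := mem_annH'.mp hv _ (by omega)
    have h2 : ρ.h nS v = 0 := mem_annH'.mp hv _ le_rfl
    have key := hh_apply ρ nS (-1 - nS) v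
    rw [h1, h2, map_zero, map_zero, sub_zero,
      if_pos (by omega : nS + (-1 - nS) + 1 = 0), hc2] at key
    have key' : ((nS : ℂ) + 1 / 2) • ℓ • v = 0 := key.symm
    rcases smul_eq_zero.mp key' with h | h
    · exact absurd h (half_ne nS)
    rcases smul_eq_zero.mp h with h | h
    · exact absurd h hℓ
    · simpa using h
  -- (ii) second half: 0 ≤ mS
  have hmS0 : 0 ≤ mS := by
    by_contra hneg
    push_neg at hneg
    apply hmS₁
    rw [eq_bot_iff]
    intro v hv
    rw [Submodule.mem_inf] at hv
    obtain ⟨hvH, hvD⟩ := hv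
    have hd : ρ.d (-1) v = 0 := mem_annD'.mp hvD (-1) (by omega)
    have hhv : ρ.h nS v = 0 := mem_annH'.mp hvH nS le_rfl
    have key := dh_apply ρ (-1) nS v
    rw [hd, hhv, map_zero, map_zero, sub_zero,
      show (-1 : ℤ) + nS = nS - 1 by omega] at key
    have hzero : ρ.h (nS - 1) v = 0 := by
      rcases smul_eq_zero.mp key.symm with h | h
      · exact absurd (neg_eq_zero.mp h) (half_ne nS)
      · exact h
    have hv0 := inj_h v hvH hzero
    simpa using hv0
  -- (iii) stability of W₀ under d_m, m ≥ 0
  have dstabH : ∀ m : ℤ, 0 ≤ m → ∀ v ∈ annH ρ nS, ρ.d m v ∈ annH ρ nS := by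
    intro m hm v hv
    rw [mem_annH'] at hv ⊢
    intro j hj
    have key := dh_apply ρ m j v
    rw [hv j hj, map_zero, hv (m + j) (by omega), smul_zero, zero_sub,
      neg_eq_zero] at key
    exact key
  -- (iii) stability of W₀ under h_{i+1/2}, i ≥ -nS
  have hstabH : ∀ i : ℤ, -nS ≤ i → ∀ v ∈ annH ρ nS, ρ.h i v ∈ annH ρ nS := by
    intro i hi v hv
    rw [mem_annH'] at hv ⊢
    intro j hj
    have key := hh_apply ρ j i v
    rw [hv j hj, map_zero, sub_zero, if_neg (by omega : ¬ j + i + 1 = 0),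
      zero_smul] at key
    exact key
  -- (iii) stability under c₁, c₂
  have c1stabH : ∀ v ∈ annH ρ nS, ρ.c1 v ∈ annH ρ nS := by
    intro v hv
    rw [mem_annH'] at hv ⊢
    intro j hj
    rw [← comm_of_lie_zero (ρ.c1_h j) v, hv j hj, map_zero]
  have c2stabH : ∀ v ∈ annH ρ nS, ρ.c2 v ∈ annH ρ nS := by
    intro v hv
    rw [mem_annH'] at hv ⊢
    intro j hj
    rw [hc2, map_smul, hv j hj, smul_zero]
  -- general Sugawara stability principle
  have sug : ∀ P : Submodule ℂ V, (∀ i : ℤ, -nS ≤ i → ∀ w ∈ P, ρ.h i w ∈ P) →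
      ∀ L : ℤ → Module.End ℂ V, ρ.toHeis.Sugawara ℓ L →
      ∀ n : ℤ, 0 ≤ n → ∀ v ∈ P, (∀ i : ℤ, nS ≤ i → ρ.h i v = 0) → L n v ∈ P := by
    intro P hP L hL n hn v hvP hvann
    have key := hL n v (nS - 1) (fun i hi => hvann i (by omega))
    rw [key]
    by_cases hn0 : n = 0
    · rw [if_pos hn0]
      refine Submodule.add_mem _ (Submodule.smul_mem _ _ (Submodule.sum_mem _ ?_))
        (Submodule.smul_mem _ _ hvP)
      intro i hi
      rw [Finset.mem_Icc] at hi
      exact hP (-1 - i) (by omega) _ (hP i (by omega) v hvP)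
    · rw [if_neg hn0]
      refine Submodule.smul_mem _ _ (Submodule.sum_mem _ ?_)
      intro i hi
      rw [Finset.mem_Icc] at hi
      exact hP (n - 1 - i) (by omega) _ (hP i (by omega) v hvP)
  refine ⟨⟨inj_h, inj_d⟩, ⟨hnS0, hmS0⟩,
    ⟨hnS₁, dstabH, hstabH, c1stabH, c2stabH, ?_⟩, ?_⟩
  · -- (iii) Sugawara stability of W₀
    intro L hL n hn v hv
    exact sug (annH ρ nS) hstabH L hL n hn v hv (mem_annH'.mp hv)
  · -- (iv)
    intro h2n
    have hstabU : ∀ i : ℤ, -nS ≤ i → ∀ v ∈ annH ρ nS ⊓ annD ρ mS,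
        ρ.h i v ∈ annH ρ nS ⊓ annD ρ mS := by
      intro i hi v hv
      rw [Submodule.mem_inf] at hv ⊢
      obtain ⟨hvH, hvD⟩ := hv
      refine ⟨hstabH i hi v hvH, ?_⟩
      rw [mem_annD'] at hvD ⊢
      intro p hp
      have key := dh_apply ρ p i v
      rw [hvD p hp, map_zero, sub_zero, mem_annH'.mp hvH (p + i) (by omega),
        smul_zero] at key
      exact key
    refine ⟨hmS₁, ?_, hstabU, ?_, ?_, ?_⟩
    · -- d-stability of U₀
      intro m hm v hv
      rw [Submodule.mem_inf] at hv ⊢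
      obtain ⟨hvH, hvD⟩ := hv
      refine ⟨dstabH m hm v hvH, ?_⟩
      rw [mem_annD'] at hvD ⊢
      intro p hp
      have key := dd_apply ρ p m v
      rw [hvD p hp, map_zero, hvD (p + m) (by omega), smul_zero, zero_add,
        sub_zero] at key
      rw [key]
      by_cases hpm : p + m = 0
      · rw [if_pos hpm]
        have hp0 : p = 0 := by omega
        subst hp0
        norm_num
      · rw [if_neg hpm, zero_smul]
    · -- c₁-stability of U₀
      intro v hv
      rw [Submodule.mem_inf] at hv ⊢
      obtain ⟨hvH, hvD⟩ := hv
      refine ⟨c1stabH v hvH, ?_⟩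
      rw [mem_annD'] at hvD ⊢
      intro p hp
      rw [← comm_of_lie_zero (ρ.c1_d p) v, hvD p hp, map_zero]
    · -- c₂-stability of U₀
      intro v hv
      rw [Submodule.mem_inf] at hv ⊢
      obtain ⟨hvH, hvD⟩ := hv
      refine ⟨c2stabH v hvH, ?_⟩
      rw [mem_annD'] at hvD ⊢
      intro p hp
      rw [hc2, map_smul, hvD p hp, smul_zero]
    · -- (iv) Sugawara stability of U₀
      intro L hL n hn v hv
      exact sug (annH ρ nS ⊓ annD ρ mS) hstabU L hL n hn v hv
        (mem_annH'.mp (Submodule.mem_inf.mp hv).1)
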